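/- arXiv:1811.03176 — 8 statements merged into one kernel-verified Lean document; each statement's English description precedes it below -/
import Mathlib

section
/- Let S be a type of states, R : S → S → Prop a transition relation, final : S → Prop a set of final states, and s0 : S an initial state. Let C be a conflict sequence of length n. Then for every i < n, every state in the intersection ⋂_{0 ≤ j ≤ i} C j cannot reach a final state in up to i steps; that is, for every s ∈ ⋂_{0 ≤ j ≤ i} C j and every k ≤ i, no path of length exactly k from s ends in a final state. -/
/-- A state `s` can reach a final state in exactly `k` steps:
there is a path `t 0 = s, t 1, ..., t k` with `final (t k)`. -/
def ReachFinalIn {S : Type*} (R : S → S → Prop) (final : S → Prop) (s : S) (k : ℕ) : Prop :=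
  ∃ t : ℕ → S, t 0 = s ∧ (∀ j < k, R (t j) (t (j + 1))) ∧ final (t k)

/-- `C` is a conflict sequence of length `n` for the transition system `(S, R, final, s0)`. -/
def IsConflictSeq {S : Type*} (R : S → S → Prop) (final : S → Prop) (s0 : S)
    (n : ℕ) (C : ℕ → Set S) : Prop :=
  1 ≤ n ∧
  (∀ i < n, s0 ∈ C i) ∧
  (∀ s ∈ C 0, ¬ final s) ∧
  (∀ i, i + 1 < n → ∀ s ∈ C (i + 1), ∀ t, R s t → t ∈ C i)

theorem stmt0 {S : Type*} (R : S → S → Prop) (final : S → Prop) (s0 : S)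
    (n : ℕ) (C : ℕ → Set S) (hC : IsConflictSeq R final s0 n C) :
    ∀ i < n, ∀ s : S, s ∈ ⋂ j ≤ i, C j → ∀ k ≤ i, ¬ ReachFinalIn R final s k := by
  obtain ⟨hn, hs0, h0, hstep⟩ := hC
  intro i hin s hs k hki hreach
  induction k generalizing s i with
  | zero =>
    obtain ⟨t, ht0, _, htf⟩ := hreach
    exact h0 s (by simpa using Set.mem_iInter₂.mp hs 0 (Nat.zero_le i)) (ht0 ▸ htf)
  | succ k ih =>
    obtain ⟨t, ht0, htR, htf⟩ := hreach
    have hik : k + 1 ≤ i := hki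
    have hi1 : i - 1 < n := lt_of_le_of_lt (Nat.sub_le i 1) hin
    apply ih (i-1) hi1 (t 1) ?_ (by omega)
    · exact ⟨fun j => t (j+1), rfl, fun j hj => htR (j+1) (by omega), htf⟩
    · apply Set.mem_iInter₂.mpr
      intro j hj
      have hmem : s ∈ C (j+1) := Set.mem_iInter₂.mp hs (j+1) (by omega)
      exact hstep j (by omega) s hmem (t 1) (ht0 ▸ htR 0 (by omega))
end

section
/- Let S be a type of states, R : S → S → Prop a transition relation, final : S → Prop a set of final states, and s0 : S an initial state. Let C be a conflict sequence of length n. Then for every i < n, every state in C i cannot reach a final state in exactly i steps; that is, for every s ∈ C i, no path of length exactly i from s ends in a final state. -/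
theorem stmt1 {S : Type*} (R : S → S → Prop) (final : S → Prop) (s0 : S)
    (n : ℕ) (C : ℕ → Set S) (hC : IsConflictSeq R final s0 n C) :
    ∀ i < n, ∀ s ∈ C i, ¬ ReachFinalIn R final s i := by
  obtain ⟨-, -, h0, hstep⟩ := hC
  intro i
  induction i with
  | zero =>
    rintro _ s hs ⟨t, ht0, -, hfin⟩
    exact h0 s hs (ht0 ▸ hfin)
  | succ i ih =>
    rintro hin s hs ⟨t, ht0, hR, hfin⟩
    have h1 : t 1 ∈ C i := hstep i hin s hs (t 1) (ht0 ▸ hR 0 (Nat.succ_pos i))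
    exact ih (Nat.lt_of_succ_lt hin) (t 1) h1
      ⟨fun j => t (j + 1), rfl, fun j hj => hR (j + 1) (Nat.succ_lt_succ hj), hfin⟩
end

section
/- Let S be a type of states, R : S → S → Prop a transition relation, final : S → Prop a set of final states, and s0 : S an initial state. If s_0 = s0, s_1, ..., s_n is a run (i.e., R s_k s_{k+1} for all k < n) with s_n a final state, then for every index i with 0 ≤ i ≤ n and every conflict sequence C of length strictly greater than n − i, the state s_i is not in C (n − i). -/
lemma key {S : Type*} (R : S → S → Prop) (final : S → Prop) (s0 : S)
    (m : ℕ) (C : ℕ → Set S) (hC : IsConflictSeq R final s0 m C) :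
    ∀ k, k < m → ∀ x, x ∈ C k → ¬ ReachFinalIn R final x k := by
  intro k
  induction k with
  | zero =>
    rintro _ x hx ⟨t, ht0, _, htf⟩
    exact hC.2.2.1 x hx (ht0 ▸ htf)
  | succ k ih =>
    rintro hkm x hx ⟨t, ht0, htr, htf⟩
    have h1 : t 1 ∈ C k := hC.2.2.2 k hkm x hx (t 1) (ht0 ▸ htr 0 (Nat.succ_pos k))
    exact ih (Nat.lt_of_succ_lt hkm) (t 1) h1
      ⟨fun j => t (j + 1), rfl, fun j hj => htr (j + 1) (by omega), htf⟩

theorem stmt3 {S : Type*} (R : S → S → Prop) (final : S → Prop) (s0 : S)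
    (n : ℕ) (s : ℕ → S) (hs0 : s 0 = s0)
    (hrun : ∀ k < n, R (s k) (s (k + 1))) (hfin : final (s n)) :
    ∀ i ≤ n, ∀ (m : ℕ) (C : ℕ → Set S),
      IsConflictSeq R final s0 m C → n - i < m → s i ∉ C (n - i) := by
  intro i hi m C hC hlt hmem
  refine key R final s0 m C hC (n - i) hlt (s i) hmem
    ⟨fun j => s (i + j), by simp, fun j hj => hrun (i + j) (by omega), ?_⟩
  have : i + (n - i) = n := by omega
  simpa [this] using hfin
end

section
/- Let S be a type of states, R : S → S → Prop a transition relation, final : S → Prop a set of final states, and s0 : S an initial state. There exists a run s_0 = s0, s_1, ..., s_n ending in a final state s_n if and only if there exists a run s_0 = s0, s_1, ..., s_n such that (1) s_n is a final state, and (2) for every i with 0 ≤ i ≤ n and every conflict sequence C of length strictly greater than n − i, the state s_i is not in C (n − i). -/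
lemma reach_not_mem {S : Type*} (R : S → S → Prop) (final : S → Prop) (s0 : S) :
    ∀ k (s : S), ReachFinalIn R final s k → ∀ m (C : ℕ → Set S),
      IsConflictSeq R final s0 m C → k < m → s ∉ C k := by
  intro k
  induction k with
  | zero =>
    rintro s ⟨t, ht0, _, htf⟩ m C ⟨_, _, h0, _⟩ _ hmem
    exact h0 s hmem (ht0 ▸ htf)
  | succ k ih =>
    rintro s ⟨t, ht0, htR, htf⟩ m C hC hlt hmem
    have hstep := hC.2.2.2 k hlt s hmem (t 1) (ht0 ▸ htR 0 (Nat.succ_pos k))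
    exact ih (t 1) ⟨fun j => t (j + 1), rfl, fun j hj => htR (j + 1) (by omega), htf⟩
      m C hC (by omega) hstep

theorem stmt4 {S : Type*} (R : S → S → Prop) (final : S → Prop) (s0 : S) :
    (∃ (n : ℕ) (s : ℕ → S), s 0 = s0 ∧ (∀ k < n, R (s k) (s (k + 1))) ∧ final (s n)) ↔
    (∃ (n : ℕ) (s : ℕ → S), s 0 = s0 ∧ (∀ k < n, R (s k) (s (k + 1))) ∧ final (s n) ∧
      ∀ i ≤ n, ∀ (m : ℕ) (C : ℕ → Set S),
        IsConflictSeq R final s0 m C → n - i < m → s i ∉ C (n - i)) := by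
  constructor
  · rintro ⟨n, s, h0, hR, hf⟩
    refine ⟨n, s, h0, hR, hf, fun i hi m C hC hlt => ?_⟩
    refine reach_not_mem R final s0 (n - i) (s i)
      ⟨fun j => s (i + j), rfl, fun j hj => hR (i + j) (by omega), ?_⟩ m C hC hlt
    have : i + (n - i) = n := by omega
    simpa only [this] using hf
  · rintro ⟨n, s, h0, hR, hf, _⟩
    exact ⟨n, s, h0, hR, hf⟩
end

section
/- Let S be a type of states, R : S → S → Prop a transition relation, final : S → Prop a set of final states, and s0 : S an initial state. Let C be a conflict sequence of length n, let i ≥ 1 with i − 1 < n, and let s be a state all of whose one-transition successors (all t with R s t) lie in C (i − 1). Then s cannot reach a final state in exactly i steps; that is, no path of length exactly i from s ends in a final state. -/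
theorem stmt5 {S : Type*} (R : S → S → Prop) (final : S → Prop) (s0 : S)
    (n : ℕ) (C : ℕ → Set S) (hC : IsConflictSeq R final s0 n C)
    (i : ℕ) (hi1 : 1 ≤ i) (hin : i - 1 < n)
    (s : S) (hsucc : ∀ t, R s t → t ∈ C (i - 1)) :
    ¬ ReachFinalIn R final s i := by
  rintro ⟨t, ht0, htR, htf⟩
  obtain ⟨-, -, h0, hstep⟩ := hC
  have key : ∀ j, 1 ≤ j → j ≤ i → t j ∈ C (i - j) := by
    intro j hj1 hji
    induction j with
    | zero => omega
    | succ j ih =>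
      rcases Nat.eq_zero_or_pos j with hj0 | hj0
      · subst hj0
        have := hsucc (t 1) (by have := htR 0 (by omega); rwa [ht0] at this)
        simpa using this
      · have hji' : j ≤ i := by omega
        have hmem : t j ∈ C (i - j) := ih hj0 (by omega)
        have hieq : i - j = (i - (j + 1)) + 1 := by omega
        have hlt : (i - (j + 1)) + 1 < n := by omega
        rw [hieq] at hmem
        exact hstep _ hlt _ hmem _ (htR j (by omega))
  have := key i hi1 le_rfl
  simp only [Nat.sub_self] at this
  exact h0 _ this htf
end

section
/- Let S be a type of states, R : S → S → Prop a transition relation, final : S → Prop a set of final states, and s0 : S an initial state. Suppose there exist a conflict sequence C of length n and an index i with i + 1 < n such that ⋂_{0 ≤ j ≤ i} C j ⊆ C (i + 1). Then every state reachable from s0 (under the reflexive–transitive closure of R) lies in ⋂_{0 ≤ j ≤ i} C j. -/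
theorem stmt6 {S : Type*} (R : S → S → Prop) (final : S → Prop) (s0 : S)
    (n : ℕ) (C : ℕ → Set S) (hC : IsConflictSeq R final s0 n C)
    (i : ℕ) (hi : i + 1 < n) (hsub : (⋂ j ≤ i, C j) ⊆ C (i + 1)) :
    ∀ t : S, Relation.ReflTransGen R s0 t → t ∈ ⋂ j ≤ i, C j := by
  obtain ⟨-, h0, -, hstep⟩ := hC
  intro t ht
  induction ht with
  | refl =>
    simp only [Set.mem_iInter]
    intro j hj
    exact h0 j (lt_of_le_of_lt (le_trans hj (Nat.le_succ i)) hi)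
  | tail hab hbc ih =>
    rename_i b c
    simp only [Set.mem_iInter] at ih ⊢
    intro j hj
    rcases lt_or_eq_of_le hj with hj' | rfl
    · exact hstep j (lt_trans (by omega) hi) b (ih (j + 1) (by omega)) c hbc
    · exact hstep j hi b (hsub (Set.mem_iInter.mpr fun k => Set.mem_iInter.mpr fun hk => ih k hk)) c hbc
end

section
/- Let S be a type of states, R : S → S → Prop a transition relation, final : S → Prop a set of final states, and s0 : S an initial state. Suppose there exist a conflict sequence C of length n and an index i with i + 1 < n such that ⋂_{0 ≤ j ≤ i} C j ⊆ C (i + 1). Then no final state is reachable from s0 (under the reflexive–transitive closure of R); in particular s0 itself is not final. -/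
theorem stmt7 {S : Type*} (R : S → S → Prop) (final : S → Prop) (s0 : S)
    (n : ℕ) (C : ℕ → Set S) (hC : IsConflictSeq R final s0 n C)
    (i : ℕ) (hi : i + 1 < n) (hsub : (⋂ j ≤ i, C j) ⊆ C (i + 1)) :
    (∀ t : S, Relation.ReflTransGen R s0 t → ¬ final t) ∧ ¬ final s0 := by
  obtain ⟨-, hs0, hfin, hstep⟩ := hC
  have inv : ∀ t : S, Relation.ReflTransGen R s0 t → ∀ j ≤ i, t ∈ C j := by
    intro t ht
    induction ht with
    | refl => intro j hj; exact hs0 j (lt_of_le_of_lt hj (Nat.lt_of_succ_lt hi))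
    | tail hab hbc ih =>
      intro j hj
      rename_i b c
      have hb : b ∈ C (i + 1) := hsub (Set.mem_iInter₂.mpr ih)
      have hbj : b ∈ C (j + 1) := by
        rcases Nat.lt_or_ge j i with h | h
        · exact ih (j + 1) h
        · have : j = i := le_antisymm hj h
          subst this; exact hb
      exact hstep j (lt_of_le_of_lt (Nat.succ_le_succ hj) hi) b hbj c hbc
  have main : ∀ t : S, Relation.ReflTransGen R s0 t → ¬ final t := by
    intro t ht
    exact hfin t (inv t ht 0 (Nat.zero_le _))
  exact ⟨main, main s0 Relation.ReflTransGen.refl⟩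
end

section
/- Let S be a type of states, R : S → S → Prop a transition relation, final : S → Prop a set of final states, and s0 : S an initial state. Suppose no final state is reachable from s0 (under the reflexive–transitive closure of R). Then for every n ≥ 1, the function C assigning to each i < n the set C i = { s : S | no path of length exactly i from s ends in a final state } is a conflict sequence of length n. -/
lemma path_rtg {S : Type*} (R : S → S → Prop) (t : ℕ → S) :
    ∀ k, (∀ j < k, R (t j) (t (j + 1))) → Relation.ReflTransGen R (t 0) (t k) := by
  intro k
  induction k with
  | zero => intro _; exact Relation.ReflTransGen.refl
  | succ m ih =>
    intro h
    exact (ih fun j hj => h j (Nat.lt_succ_of_lt hj)).tail (h m (Nat.lt_succ_self m))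

theorem stmt8 {S : Type*} (R : S → S → Prop) (final : S → Prop) (s0 : S)
    (hunreach : ∀ t : S, Relation.ReflTransGen R s0 t → ¬ final t) :
    ∀ n : ℕ, 1 ≤ n →
      IsConflictSeq R final s0 n (fun i => { s : S | ¬ ReachFinalIn R final s i }) := by
  intro n hn
  refine ⟨hn, ?_, ?_, ?_⟩
  · intro i _ ⟨t, h0, hpath, hfin⟩
    exact hunreach (t i) (h0 ▸ path_rtg R t i hpath) hfin
  · intro s hs hfin
    exact hs ⟨fun _ => s, rfl, fun j hj => absurd hj (Nat.not_lt_zero j), hfin⟩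
  · intro i _ s hs u hRu hu
    apply hs
    rcases hu with ⟨t, h0, hpath, hfin⟩
    refine ⟨fun j => if j = 0 then s else t (j - 1), by simp, ?_, by simp [hfin]⟩
    intro j hj
    rcases Nat.eq_zero_or_pos j with rfl | hpos
    · simpa [h0] using hRu
    · have : j ≠ 0 := Nat.pos_iff_ne_zero.mp hpos
      simp only [this, if_false, Nat.succ_ne_zero]
      have : j - 1 + 1 = j := Nat.succ_pred_eq_of_pos hpos
      have hR := hpath (j - 1) (by omega)
      simpa [this] using hR
end
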